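/- arXiv:1709.03052 — 6 statements merged into one kernel-verified Lean document; each statement's English description precedes it below -/
import Mathlib

section
/- Let Ω ⊆ ℝ^k be an open convex cone not containing a line and x ∈ Ω. Then the isotropy subgroup G_x(Ω) = {A ∈ G(Ω) : Ax = x} is compact. -/
/-!
Let `U = Ω ∩ (x - Ω)`. Since `Ω` is open and contains no line, `Ω + closure Ω ⊆ Ω` forces
`closure Ω` to be salient, and then `U` is bounded: normalising a sequence of `U` that escapes to
infinity produces a unit vector `v` with `v, -v ∈ closure Ω`. A matrix `A` with `AΩ ⊆ Ω` and
`Ax = x` maps `U` into itself and fixes `x / 2 ∈ U`, so it maps a ball around `x / 2` into a fixed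
ball around `0`, which bounds its entries uniformly. The condition `AΩ ⊆ Ω` may be relaxed to the
closed condition `AΩ ⊆ closure Ω`, because `Az = A(z - εx) + εx`; hence the monoid
`{A | AΩ ⊆ Ω, Ax = x}` is compact. The isotropy group consists of the elements of this monoid
having a two-sided inverse in it, and these form the projection of a compact subset of its square.
-/

open Matrix Filter Topology Set Metric

namespace ConvexCone

def ofPosComb {R M : Type*} [Field R] [LinearOrder R] [IsStrictOrderedRing R] [AddCommGroup M]
    [Module R M] (Ω : Set M)
    (h : ∀ x ∈ Ω, ∀ y ∈ Ω, ∀ a b : R, 0 < a → 0 < b → a • x + b • y ∈ Ω) :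
    ConvexCone R M where
  carrier := Ω
  smul_mem' c hc x hx := by
    simpa [← add_smul] using h x hx x hx (c / 2) (c / 2) (by positivity) (by positivity)
  add_mem' x hx y hy := by simpa using h x hx y hy 1 1 one_pos one_pos

variable {E : Type*} [NormedAddCommGroup E] [NormedSpace ℝ E] {K : ConvexCone ℝ E}

theorem add_mem_of_mem_closure (hK : IsOpen (K : Set E)) {x w : E} (hx : x ∈ K)
    (hw : w ∈ closure (K : Set E)) : x + w ∈ K := by
  obtain ⟨y, hyV, hyK⟩ := mem_closure_iff.1 hw {y | x + w - y ∈ K}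
    (hK.preimage (by fun_prop)) (by simpa using hx)
  simpa using K.add_mem hyV hyK

theorem salient_closure (hK : IsOpen (K : Set E)) {x : E} (hx : x ∈ K)
    (hline : ¬ ∃ p v : E, v ≠ 0 ∧ ∀ t : ℝ, p + t • v ∈ K) : K.closure.Salient := by
  intro v hv hv0 hnv
  refine hline ⟨x, v, hv0, fun t => ?_⟩
  rcases lt_trichotomy t 0 with ht | rfl | ht
  · rw [← neg_smul_neg]
    exact add_mem_of_mem_closure hK hx (K.closure.smul_mem (neg_pos.2 ht) hnv)
  · simpa using hx
  · exact add_mem_of_mem_closure hK hx (K.closure.smul_mem ht hv)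

theorem isBounded_setOf_mem_and_sub_mem [FiniteDimensional ℝ E] {C : ConvexCone ℝ E}
    (hC : IsClosed (C : Set E)) (hs : C.Salient) (x : E) :
    Bornology.IsBounded {y | y ∈ C ∧ x - y ∈ C} := by
  by_contra hunb
  rw [isBounded_iff_forall_norm_le] at hunb
  push Not at hunb
  choose y hy hyn using fun n : ℕ => hunb n
  have hpos : ∀ n, 0 < ‖y n‖ := fun n => (Nat.cast_nonneg n).trans_lt (hyn n)
  obtain ⟨v, hv, φ, hφ, hlim⟩ := (isCompact_sphere (0 : E) 1).tendsto_subseq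
    (x := fun n => ‖y n‖⁻¹ • y n) fun n => by simp [norm_smul, (hpos n).ne']
  have hinv : Tendsto (fun n => ‖y (φ n)‖⁻¹) atTop (𝓝 0) :=
    tendsto_inv_atTop_zero.comp <| tendsto_atTop_mono (fun n => (hyn (φ n)).le)
      (tendsto_natCast_atTop_atTop.comp hφ.tendsto_atTop)
  have hvC : v ∈ C := hC.mem_of_tendsto hlim
    (Eventually.of_forall fun n => C.smul_mem (inv_pos.2 (hpos _)) (hy _).1)
  have hnvC : -v ∈ C := hC.mem_of_tendsto (by simpa using (hinv.smul_const x).sub hlim)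
    (Eventually.of_forall fun n => by
      simpa only [Function.comp, smul_sub, SetLike.mem_coe] using
        C.smul_mem (inv_pos.2 (hpos _)) (hy (φ n)).2)
  exact hs v hvC (by rintro rfl; simp at hv) hnvC

theorem mapsTo_of_mapsTo_closure (hK : IsOpen (K : Set E)) {x : E} (hx : x ∈ K)
    {f : E →ₗ[ℝ] E} (hfx : f x = x) (hf : MapsTo f K (closure K)) : MapsTo f K K := by
  intro z hz
  obtain ⟨ε, hzε, hε⟩ : ∃ ε : ℝ, z - ε • x ∈ K ∧ 0 < ε := by
    have hcont : Tendsto (fun t : ℝ => z - t • x) (𝓝[>] 0) (𝓝 z) :=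
      ((continuous_const.sub (continuous_id.smul continuous_const)).tendsto' (0 : ℝ) z
        (by simp)).mono_left nhdsWithin_le_nhds
    exact ((hcont.eventually (hK.mem_nhds hz)).and self_mem_nhdsWithin).exists
  have hfz : f z = ε • x + f (z - ε • x) := by simp [hfx]
  rw [hfz]
  exact add_mem_of_mem_closure hK (K.smul_mem hε hx) (hf hzε)

end ConvexCone

namespace Matrix

theorem isCompact_setOf_abs_le {m n : Type*} (C : ℝ) :
    IsCompact {A : Matrix m n ℝ | ∀ i j, |A i j| ≤ C} := by
  have hbox : {A : Matrix m n ℝ | ∀ i j, |A i j| ≤ C} =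
      univ.pi fun _ => univ.pi fun _ => Icc (-C) C := by
    ext A
    simp only [mem_ofPred_eq, abs_le]
    exact ⟨fun h i _ j _ => h i j, fun h i j => h i (mem_univ i) j (mem_univ j)⟩
  rw [hbox]
  exact isCompact_univ_pi fun _ => isCompact_univ_pi fun _ => isCompact_Icc

variable {n : Type*} [Fintype n]

theorem isClosed_setOf_mapsTo_closure_and_mulVec_eq (s t : Set (n → ℝ)) (x : n → ℝ) :
    IsClosed {A : Matrix n n ℝ | MapsTo (A *ᵥ ·) s (closure t) ∧ A *ᵥ x = x} := by
  simp only [MapsTo, ofPred_and, ofPred_forall]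
  exact (isClosed_biInter fun z _ => isClosed_closure.preimage
      (continuous_id.matrix_mulVec continuous_const)).inter
    (isClosed_eq (continuous_id.matrix_mulVec continuous_const) continuous_const)

theorem abs_apply_le_of_mapsTo_closedBall {A : Matrix n n ℝ} {c : n → ℝ}
    {r R : ℝ} (hr : 0 < r) (hc : A *ᵥ c = c)
    (hA : MapsTo (A *ᵥ ·) (closedBall c r) (closedBall 0 R)) (i j : n) :
    |A i j| ≤ (R + ‖c‖) / r := by
  classical
  set w := c + r • Pi.single j (1 : ℝ)
  have hw : w ∈ closedBall c r := by simp [w, norm_smul, abs_of_pos hr, Pi.norm_single]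
  have hAw : r * |A i j| = |(A *ᵥ w - c) i| := by
    simp [w, mulVec_add, mulVec_smul, hc, mulVec_single, abs_mul, abs_of_pos hr]
  rw [le_div_iff₀ hr, mul_comm, hAw]
  calc |(A *ᵥ w - c) i| ≤ ‖A *ᵥ w - c‖ := norm_le_pi_norm (A *ᵥ w - c) i
    _ ≤ ‖A *ᵥ w‖ + ‖c‖ := norm_sub_le _ _
    _ ≤ R + ‖c‖ := by linarith [mem_closedBall_zero_iff.1 (hA hw)]

theorem isUnit_and_image_eq_and_mulVec_eq_iff {R : Type*} [CommRing R] [DecidableEq n]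
    {Ω : Set (n → R)} {x : n → R} {A : Matrix n n R} :
    (IsUnit A ∧ (A *ᵥ ·) '' Ω = Ω ∧ A *ᵥ x = x) ↔
      (MapsTo (A *ᵥ ·) Ω Ω ∧ A *ᵥ x = x) ∧
        ∃ B, (MapsTo (B *ᵥ ·) Ω Ω ∧ B *ᵥ x = x) ∧ A * B = 1 ∧ B * A = 1 := by
  constructor
  · rintro ⟨hu, himg, hAx⟩
    have hcancel (w : n → R) : (↑hu.unit⁻¹ : Matrix n n R) *ᵥ (A *ᵥ w) = w := by
      rw [mulVec_mulVec, hu.val_inv_mul, one_mulVec]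
    refine ⟨⟨(mapsTo_image _ Ω).mono_right himg.subset, hAx⟩, ↑hu.unit⁻¹, ⟨?_, ?_⟩,
      hu.mul_val_inv, hu.val_inv_mul⟩
    · intro z hz
      obtain ⟨w, hw, rfl⟩ := himg.symm.subset hz
      simpa only [hcancel] using hw
    · nth_rewrite 1 [← hAx]
      exact hcancel x
  · rintro ⟨⟨hA, hAx⟩, B, ⟨hB, -⟩, hAB, hBA⟩
    refine ⟨⟨⟨A, B, hAB, hBA⟩, rfl⟩, hA.image_subset.antisymm fun z hz => ?_, hAx⟩
    exact ⟨B *ᵥ z, hB hz, by simp only [mulVec_mulVec, hAB, one_mulVec]⟩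

end Matrix

theorem IsCompact.setOf_mem_and_exists_mul_eq_one {M : Type*} [Monoid M] [TopologicalSpace M]
    [ContinuousMul M] [T2Space M] {S : Set M} (hS : IsCompact S) :
    IsCompact {a | a ∈ S ∧ ∃ b ∈ S, a * b = 1 ∧ b * a = 1} := by
  have himage : {a | a ∈ S ∧ ∃ b ∈ S, a * b = 1 ∧ b * a = 1} =
      Prod.fst '' (S ×ˢ S ∩ {p | p.1 * p.2 = 1 ∧ p.2 * p.1 = 1}) := by
    ext a
    simp [and_assoc]
  rw [himage]
  refine ((hS.prod hS).inter_right ?_).image continuous_fst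
  exact (isClosed_eq (by fun_prop) continuous_const).inter
    (isClosed_eq (by fun_prop) continuous_const)

namespace ConvexCone

variable {n : Type*} [Fintype n] {K : ConvexCone ℝ (n → ℝ)}

theorem exists_abs_apply_le_of_mapsTo (hK : IsOpen (K : Set (n → ℝ)))
    (hline : ¬ ∃ p v : n → ℝ, v ≠ 0 ∧ ∀ t : ℝ, p + t • v ∈ K) {x : n → ℝ} (hx : x ∈ K) :
    ∃ C, ∀ A : Matrix n n ℝ, MapsTo (A *ᵥ ·) K K → A *ᵥ x = x → ∀ i j, |A i j| ≤ C := by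
  set U := {y | y ∈ K ∧ x - y ∈ K}
  set c : n → ℝ := (2⁻¹ : ℝ) • x
  have hcU : c ∈ U := by
    have hc : c ∈ K := K.smul_mem (by norm_num) hx
    exact ⟨hc, by rwa [show x - c = c by module]⟩
  obtain ⟨r, hr, hball⟩ : ∃ r > 0, closedBall c r ⊆ U :=
    nhds_basis_closedBall.mem_iff.1 ((hK.inter (hK.preimage (by fun_prop))).mem_nhds hcU)
  have hbdd : Bornology.IsBounded U :=
    (isBounded_setOf_mem_and_sub_mem isClosed_closure (salient_closure hK hx hline) x).subset
      fun y (hy : y ∈ U) => ⟨subset_closure hy.1, subset_closure hy.2⟩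
  obtain ⟨R, hR⟩ := hbdd.subset_closedBall 0
  refine ⟨(R + ‖c‖) / r, fun A hA hAx => abs_apply_le_of_mapsTo_closedBall hr ?_ ?_⟩
  · rw [mulVec_smul, hAx]
  · intro y hy
    obtain ⟨hyK, hxyK⟩ := hball hy
    exact hR ⟨hA hyK, by simpa [mulVec_sub, hAx] using hA hxyK⟩

theorem isCompact_setOf_mapsTo_and_mulVec_eq (hK : IsOpen (K : Set (n → ℝ)))
    (hline : ¬ ∃ p v : n → ℝ, v ≠ 0 ∧ ∀ t : ℝ, p + t • v ∈ K) {x : n → ℝ} (hx : x ∈ K) :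
    IsCompact {A : Matrix n n ℝ | MapsTo (A *ᵥ ·) K K ∧ A *ᵥ x = x} := by
  obtain ⟨C, hC⟩ := exists_abs_apply_le_of_mapsTo hK hline hx
  have hclosure : {A : Matrix n n ℝ | MapsTo (A *ᵥ ·) K K ∧ A *ᵥ x = x} =
      {A | MapsTo (A *ᵥ ·) K (closure K) ∧ A *ᵥ x = x} := by
    ext A
    exact ⟨fun h => ⟨h.1.mono_right subset_closure, h.2⟩,
      fun h => ⟨mapsTo_of_mapsTo_closure (f := A.mulVecLin) hK hx h.2 h.1, h.2⟩⟩
  refine (isCompact_setOf_abs_le C).of_isClosed_subset ?_ fun A hA => hC A hA.1 hA.2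
  rw [hclosure]
  exact isClosed_setOf_mapsTo_closure_and_mulVec_eq _ _ x

end ConvexCone

/-- For an open convex cone `Ω ⊆ ℝ^k` containing no line and a point
`x ∈ Ω`, the isotropy subgroup `G_x(Ω) = {A ∈ G(Ω) : Ax = x}` of the linear
automorphism group of `Ω` is compact. -/
theorem isotropy_compact (k : ℕ) (Ω : Set (Fin k → ℝ))
    (hopen : IsOpen Ω)
    (hcone : ∀ x ∈ Ω, ∀ y ∈ Ω, ∀ a b : ℝ, 0 < a → 0 < b → a • x + b • y ∈ Ω)
    (hline : ¬ ∃ (p v : Fin k → ℝ), v ≠ 0 ∧ ∀ t : ℝ, p + t • v ∈ Ω)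
    (x : Fin k → ℝ) (hx : x ∈ Ω) :
    IsCompact {A : Matrix (Fin k) (Fin k) ℝ |
      IsUnit A ∧ (fun y => A.mulVec y) '' Ω = Ω ∧ A.mulVec x = x} := by
  have hmonoid := ConvexCone.isCompact_setOf_mapsTo_and_mulVec_eq
    (K := ConvexCone.ofPosComb Ω hcone) hopen hline hx
  convert hmonoid.setOf_mem_and_exists_mul_eq_one using 1
  ext A
  exact Matrix.isUnit_and_image_eq_and_mulVec_eq_iff
end

section
/- If Ω ⊆ ℝ^k is an open convex cone not containing a line and x ∈ Ω, then the set Ω ∩ (x - Ω) is bounded. -/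
/-- If `Ω ⊆ ℝ^k` is an open convex cone not containing a line and
`x ∈ Ω`, then `Ω ∩ (x - Ω)` is bounded. -/
theorem cone_inter_bounded (k : ℕ) (Ω : Set (Fin k → ℝ))
    (hopen : IsOpen Ω)
    (hcone : ∀ x ∈ Ω, ∀ y ∈ Ω, ∀ a b : ℝ, 0 < a → 0 < b → a • x + b • y ∈ Ω)
    (hline : ¬ ∃ (p v : Fin k → ℝ), v ≠ 0 ∧ ∀ t : ℝ, p + t • v ∈ Ω)
    (x : Fin k → ℝ) (hx : x ∈ Ω) :
    Bornology.IsBounded (Ω ∩ {y | ∃ z ∈ Ω, y = x - z}) := by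
  by_contra hb
  rw [isBounded_iff_forall_norm_le] at hb
  push_neg at hb
  have hyall : ∀ n : ℕ, ∃ z, z ∈ Ω ∧ (x - z ∈ Ω) ∧ (n : ℝ) + 1 < ‖z‖ := by
    intro n
    obtain ⟨z, ⟨hz1, w, hw, hzw⟩, hz2⟩ := hb ((n : ℝ) + 1)
    refine ⟨z, hz1, ?_, hz2⟩
    rw [hzw, sub_sub_cancel]
    exact hw
  choose y hy1 hy2 hy3 using hyall
  have hypos : ∀ n, 0 < ‖y n‖ := fun n =>
    lt_of_le_of_lt (by positivity) (hy3 n)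
  set u : ℕ → (Fin k → ℝ) := fun n => ‖y n‖⁻¹ • y n with hu
  have humem : ∀ n, u n ∈ Metric.sphere (0 : Fin k → ℝ) 1 := by
    intro n
    rw [mem_sphere_zero_iff_norm, hu]
    simp only [norm_smul, norm_inv, norm_norm]
    exact inv_mul_cancel₀ (hypos n).ne'
  obtain ⟨v, hvs, φ, hφ, hconv⟩ :=
    (isCompact_sphere (0 : Fin k → ℝ) 1).tendsto_subseq humem
  have hvne : v ≠ 0 := by
    intro h
    rw [mem_sphere_zero_iff_norm, h] at hvs
    simp at hvs
  have hnormtend : Filter.Tendsto (fun n => ‖y (φ n)‖) Filter.atTop Filter.atTop := by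
    apply Filter.tendsto_atTop_mono (f := fun n : ℕ => (n : ℝ))
    · intro n
      have h1 : (n : ℝ) ≤ (φ n : ℝ) := Nat.cast_le.mpr (hφ.le_apply)
      have h2 : (φ n : ℝ) + 1 ≤ ‖y (φ n)‖ := (hy3 (φ n)).le
      linarith
    · exact tendsto_natCast_atTop_atTop
  have hclos : ∀ w ∈ closure Ω, x + w ∈ Ω := by
    intro w hw
    obtain ⟨ε, hε, hball⟩ := Metric.isOpen_iff.mp hopen x hx
    obtain ⟨w', hw', hd⟩ := Metric.mem_closure_iff.mp hw ε hε
    have hmem : x + (w - w') ∈ Ω := by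
      apply hball
      rw [Metric.mem_ball, dist_eq_norm]
      simpa [dist_eq_norm] using hd
    have h := hcone _ hmem w' hw' 1 1 one_pos one_pos
    have heq : (1 : ℝ) • (x + (w - w')) + (1 : ℝ) • w' = x + w := by
      simp; abel
    rwa [heq] at h
  have hconemul : ∀ z ∈ Ω, ∀ c : ℝ, 0 < c → c • z ∈ Ω := by
    intro z hz c hc
    have h := hcone z hz z hz (c / 2) (c / 2) (by positivity) (by positivity)
    rwa [← add_smul, add_halves] at h
  have hB : ∀ t : ℝ, 0 < t → t • v ∈ closure Ω := by
    intro t ht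
    refine mem_closure_of_tendsto (hconv.const_smul t)
      (Filter.Eventually.of_forall fun n => ?_)
    exact hconemul _ (hconemul _ (hy1 (φ n)) _ (inv_pos.mpr (hypos (φ n)))) t ht
  have hB' : ∀ t : ℝ, 0 < t → -(t • v) ∈ closure Ω := by
    intro t ht
    have h1 : Filter.Tendsto (fun n => t * ‖y (φ n)‖⁻¹) Filter.atTop (nhds 0) := by
      simpa using (tendsto_inv_atTop_zero.comp hnormtend).const_mul t
    have h2 : Filter.Tendsto (fun n => (t * ‖y (φ n)‖⁻¹) • x) Filter.atTop (nhds 0) := by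
      simpa using h1.smul_const x
    have h3 : Filter.Tendsto (fun n => (t * ‖y (φ n)‖⁻¹) • y (φ n)) Filter.atTop
        (nhds (t • v)) := by
      have heq : ∀ n, (t * ‖y (φ n)‖⁻¹) • y (φ n) = t • (u ∘ φ) n := by
        intro n
        simp [hu, smul_smul]
      simpa [heq] using hconv.const_smul t
    have hf : Filter.Tendsto (fun n => (t * ‖y (φ n)‖⁻¹) • (x - y (φ n)))
        Filter.atTop (nhds (-(t • v))) := by
      have h4 := h2.sub h3
      simpa [smul_sub] using h4
    refine mem_closure_of_tendsto hf (Filter.Eventually.of_forall fun n => ?_)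
    exact hconemul _ (hy2 (φ n)) _ (mul_pos ht (inv_pos.mpr (hypos (φ n))))
  apply hline
  refine ⟨x, v, hvne, fun t => ?_⟩
  rcases lt_trichotomy t 0 with h | h | h
  · have h2 := hclos _ (hB' (-t) (neg_pos.mpr h))
    simpa [neg_smul] using h2
  · simpa [h] using hx
  · exact hclos _ (hB t h)
end

section
/- Let v = (v₁, v₂) ∈ ℝ² with v₁ > 0 and v₂ > 0, and let Ω₁ be the open positive quadrant in ℝ². The subgroup G(Ω₁, v|w|²) of G(Ω₁) consisting of all A ∈ G(Ω₁) for which there exists B ∈ GL₁(ℂ) with A·(v |w|² form) = v |Bw|² form consists exactly of the matrices ρ·I₂ with ρ > 0 together with the anti-diagonal matrices with entries η v₁/v₂ and η v₂/v₁ (η > 0). In particular, the action of this group on Ω₁ is not transitive. -/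
open Matrix

/-- The open positive quadrant in `ℝ²`. -/
def posQuadrant : Set (Fin 2 → ℝ) := {x | 0 < x 0 ∧ 0 < x 1}

lemma mulVec_two (M : Matrix (Fin 2) (Fin 2) ℝ) (y : Fin 2 → ℝ) :
    M.mulVec y = ![M 0 0 * y 0 + M 0 1 * y 1, M 1 0 * y 0 + M 1 1 * y 1] := by
  funext i
  fin_cases i <;> simp [Matrix.mulVec, dotProduct, Fin.sum_univ_two]

lemma aux_nonneg (x y : ℝ) (h : ∀ ε > (0:ℝ), 0 < x + y * ε) : 0 ≤ x := by
  by_contra hx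
  push_neg at hx
  rcases le_or_gt y 0 with hy | hy
  · have := h 1 one_pos; nlinarith
  · have hε : (0:ℝ) < -x / (2 * y) := div_pos (by linarith) (by linarith)
    have h2 := h _ hε
    have h3 : x + y * (-x / (2 * y)) = x / 2 := by field_simp; ring
    nlinarith

lemma entries_nonneg (M : Matrix (Fin 2) (Fin 2) ℝ)
    (h : ∀ x ∈ posQuadrant, M.mulVec x ∈ posQuadrant) :
    0 ≤ M 0 0 ∧ 0 ≤ M 0 1 ∧ 0 ≤ M 1 0 ∧ 0 ≤ M 1 1 := by
  have h1 : ∀ ε > (0:ℝ), (0 < M 0 0 + M 0 1 * ε) ∧ (0 < M 1 0 + M 1 1 * ε) := by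
    intro ε hε
    have := h ![1, ε] ⟨by norm_num, by simpa using hε⟩
    rw [mulVec_two] at this
    obtain ⟨a, b⟩ := this
    constructor
    · simpa using a
    · simpa using b
  have h2 : ∀ ε > (0:ℝ), (0 < M 0 1 + M 0 0 * ε) ∧ (0 < M 1 1 + M 1 0 * ε) := by
    intro ε hε
    have := h ![ε, 1] ⟨by simpa using hε, by norm_num⟩
    rw [mulVec_two] at this
    obtain ⟨a, b⟩ := this
    constructor
    · simp at a; linarith
    · simp at b; linarith
  exact ⟨aux_nonneg _ _ fun ε hε => (h1 ε hε).1, aux_nonneg _ _ fun ε hε => (h2 ε hε).1,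
    aux_nonneg _ _ fun ε hε => (h1 ε hε).2, aux_nonneg _ _ fun ε hε => (h2 ε hε).2⟩

lemma inv_entries (M : Matrix (Fin 2) (Fin 2) ℝ) :
    M⁻¹ = M.det⁻¹ • !![M 1 1, -(M 0 1); -(M 1 0), M 0 0] := by
  rw [Matrix.inv_def, Ring.inverse_eq_inv]
  congr 1
  rw [Matrix.eta_fin_two M, Matrix.adjugate_fin_two]

lemma scalar_eq (ρ : ℝ) : ρ • (1 : Matrix (Fin 2) (Fin 2) ℝ) = !![ρ, 0; 0, ρ] := by
  funext i j
  fin_cases i <;> fin_cases j <;> simp [Matrix.one_apply]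

lemma classify (v₁ v₂ : ℝ) (hv₁ : 0 < v₁) (hv₂ : 0 < v₂)
    (M : Matrix (Fin 2) (Fin 2) ℝ) (hu : IsUnit M)
    (him : (fun y => M.mulVec y) '' posQuadrant = posQuadrant)
    (ρ : ℝ) (hρ : 0 < ρ) (hv : M.mulVec ![v₁, v₂] = ![ρ * v₁, ρ * v₂]) :
    (∃ ρ : ℝ, 0 < ρ ∧ M = ρ • (1 : Matrix (Fin 2) (Fin 2) ℝ)) ∨
    (∃ η : ℝ, 0 < η ∧ M = !![0, η * v₁ / v₂; η * v₂ / v₁, 0]) := by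
  have hdetu := (Matrix.isUnit_iff_isUnit_det M).mp hu
  have hdet : M.det ≠ 0 := by simpa [isUnit_iff_ne_zero] using hdetu
  have hfwd : ∀ x ∈ posQuadrant, M.mulVec x ∈ posQuadrant := by
    intro x hx
    rw [← him]
    exact ⟨x, hx, rfl⟩
  have hbwd : ∀ x ∈ posQuadrant, M⁻¹.mulVec x ∈ posQuadrant := by
    intro x hx
    rw [← him] at hx
    obtain ⟨p, hp, rfl⟩ := hx
    rw [Matrix.mulVec_mulVec, Matrix.nonsing_inv_mul M hdetu, Matrix.one_mulVec]
    exact hp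
  obtain ⟨ha, hb, hc, hd⟩ := entries_nonneg M hfwd
  obtain ⟨ia0, ib0, ic0, id0⟩ := entries_nonneg M⁻¹ hbwd
  rw [inv_entries] at ia0 ib0 ic0 id0
  have ia : 0 ≤ M.det⁻¹ * M 1 1 := by simpa using ia0
  have ib : 0 ≤ M.det⁻¹ * -(M 0 1) := by simpa using ib0
  have ic : 0 ≤ M.det⁻¹ * -(M 1 0) := by simpa using ic0
  have id' : 0 ≤ M.det⁻¹ * M 0 0 := by simpa using id0
  have hdet2 : M.det = M 0 0 * M 1 1 - M 0 1 * M 1 0 := Matrix.det_fin_two M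
  rw [mulVec_two] at hv
  have e0 : M 0 0 * v₁ + M 0 1 * v₂ = ρ * v₁ := by
    have := congrFun hv 0; simpa using this
  have e1 : M 1 0 * v₁ + M 1 1 * v₂ = ρ * v₂ := by
    have := congrFun hv 1; simpa using this
  rcases lt_or_gt_of_ne hdet with hneg | hpos
  · -- det < 0 : antidiagonal
    have hinv : M.det⁻¹ < 0 := inv_lt_zero.mpr hneg
    have hd0 : M 1 1 = 0 := by
      refine le_antisymm ?_ hd
      by_contra h
      push_neg at h
      have := mul_neg_of_neg_of_pos hinv h
      linarith
    have ha0 : M 0 0 = 0 := by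
      refine le_antisymm ?_ ha
      by_contra h
      push_neg at h
      have := mul_neg_of_neg_of_pos hinv h
      linarith
    have hbpos : 0 < M 0 1 := by
      rcases hb.lt_or_eq with h | h
      · exact h
      · exfalso; apply hdet; rw [hdet2, hd0, ha0, ← h]; ring
    have hcpos : 0 < M 1 0 := by
      rcases hc.lt_or_eq with h | h
      · exact h
      · exfalso; apply hdet; rw [hdet2, hd0, ha0, ← h]; ring
    right
    refine ⟨ρ, hρ, ?_⟩
    have hbval : M 0 1 = ρ * v₁ / v₂ := by
      field_simp
      nlinarith
    have hcval : M 1 0 = ρ * v₂ / v₁ := by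
      field_simp
      nlinarith
    rw [Matrix.eta_fin_two M, ha0, hd0, hbval, hcval]
  · -- det > 0 : scalar
    have hinv : 0 < M.det⁻¹ := inv_pos.mpr hpos
    have hb0 : M 0 1 = 0 := by
      refine le_antisymm ?_ hb
      by_contra h
      push_neg at h
      nlinarith [mul_pos hinv h]
    have hc0 : M 1 0 = 0 := by
      refine le_antisymm ?_ hc
      by_contra h
      push_neg at h
      nlinarith [mul_pos hinv h]
    have haρ : M 0 0 = ρ :=
      mul_right_cancel₀ (ne_of_gt hv₁) (show M 0 0 * v₁ = ρ * v₁ by rw [hb0] at e0; linarith)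
    have hdρ : M 1 1 = ρ :=
      mul_right_cancel₀ (ne_of_gt hv₂) (show M 1 1 * v₂ = ρ * v₂ by rw [hc0] at e1; linarith)
    left
    refine ⟨ρ, hρ, ?_⟩
    rw [scalar_eq, Matrix.eta_fin_two M, haρ, hdρ, hb0, hc0]

lemma absB (r : ℝ) (hr : 0 < r) (w : ℂ) :
    ‖(Real.sqrt r : ℂ) * w‖ ^ 2 = r * ‖w‖ ^ 2 := by
  rw [norm_mul, Complex.norm_real, Real.norm_of_nonneg (Real.sqrt_nonneg r), mul_pow,
    Real.sq_sqrt hr.le]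

lemma mem_quad (x : Fin 2 → ℝ) (h0 : 0 < x 0) (h1 : 0 < x 1) : x ∈ posQuadrant := ⟨h0, h1⟩

lemma image_eq (M : Matrix (Fin 2) (Fin 2) ℝ)
    (hf : ∀ x ∈ posQuadrant, M.mulVec x ∈ posQuadrant)
    (hs : ∀ x ∈ posQuadrant, ∃ y ∈ posQuadrant, M.mulVec y = x) :
    (fun y => M.mulVec y) '' posQuadrant = posQuadrant := by
  ext x
  constructor
  · rintro ⟨y, hy, rfl⟩
    exact hf y hy
  · intro hx
    obtain ⟨y, hy, hyx⟩ := hs x hx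
    exact ⟨y, hy, hyx⟩

lemma scalar_mem (v₁ v₂ : ℝ) (hv₁ : 0 < v₁) (hv₂ : 0 < v₂) (ρ : ℝ) (hρ : 0 < ρ) :
    IsUnit (ρ • (1 : Matrix (Fin 2) (Fin 2) ℝ)) ∧
    (fun y => (ρ • (1 : Matrix (Fin 2) (Fin 2) ℝ)).mulVec y) '' posQuadrant = posQuadrant ∧
    ∃ B : ℂ, B ≠ 0 ∧ ∀ w : ℂ,
      (ρ • (1 : Matrix (Fin 2) (Fin 2) ℝ)).mulVec
          ![v₁ * ‖w‖ ^ 2, v₂ * ‖w‖ ^ 2]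
        = ![v₁ * ‖B * w‖ ^ 2,
            v₂ * ‖B * w‖ ^ 2] := by
  rw [scalar_eq]
  refine ⟨?_, ?_, ?_⟩
  · rw [Matrix.isUnit_iff_isUnit_det, Matrix.det_fin_two_of]
    simp only [isUnit_iff_ne_zero]
    nlinarith
  · refine image_eq _ ?_ ?_
    · intro y hy
      rw [mulVec_two]
      refine mem_quad _ ?_ ?_ <;> simp <;> nlinarith [hy.1, hy.2]
    · intro x hx
      refine ⟨![ρ⁻¹ * x 0, ρ⁻¹ * x 1], mem_quad _ ?_ ?_, ?_⟩
      · have := hx.1; simp; positivity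
      · have := hx.2; simp; positivity
      · rw [mulVec_two]
        funext i
        fin_cases i <;> simp <;> field_simp
  · refine ⟨(Real.sqrt ρ : ℂ), ?_, ?_⟩
    · simp [Real.sqrt_eq_zero', not_le, ne_of_gt hρ, hρ]
    · intro w
      rw [mulVec_two, absB ρ hρ]
      funext i
      fin_cases i <;> simp <;> ring

lemma anti_mem (v₁ v₂ : ℝ) (hv₁ : 0 < v₁) (hv₂ : 0 < v₂) (η : ℝ) (hη : 0 < η) :
    IsUnit (!![0, η * v₁ / v₂; η * v₂ / v₁, 0]) ∧
    (fun y => (!![0, η * v₁ / v₂; η * v₂ / v₁, 0]).mulVec y) '' posQuadrant = posQuadrant ∧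
    ∃ B : ℂ, B ≠ 0 ∧ ∀ w : ℂ,
      (!![0, η * v₁ / v₂; η * v₂ / v₁, 0]).mulVec
          ![v₁ * ‖w‖ ^ 2, v₂ * ‖w‖ ^ 2]
        = ![v₁ * ‖B * w‖ ^ 2,
            v₂ * ‖B * w‖ ^ 2] := by
  have hb : 0 < η * v₁ / v₂ := by positivity
  have hc : 0 < η * v₂ / v₁ := by positivity
  refine ⟨?_, ?_, ?_⟩
  · rw [Matrix.isUnit_iff_isUnit_det, Matrix.det_fin_two_of]
    simp only [isUnit_iff_ne_zero]
    nlinarith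
  · refine image_eq _ ?_ ?_
    · intro y hy
      rw [mulVec_two]
      refine mem_quad _ ?_ ?_ <;> simp <;> nlinarith [hy.1, hy.2]
    · intro x hx
      refine ⟨![v₁ / (η * v₂) * x 1, v₂ / (η * v₁) * x 0], mem_quad _ ?_ ?_, ?_⟩
      · have := hx.2; simp; positivity
      · have := hx.1; simp; positivity
      · rw [mulVec_two]
        funext i
        fin_cases i <;> simp <;> field_simp <;> ring
  · refine ⟨(Real.sqrt η : ℂ), ?_, ?_⟩
    · simp [Real.sqrt_eq_zero', not_le, ne_of_gt hη, hη]
    · intro w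
      rw [mulVec_two, absB η hη]
      funext i
      fin_cases i <;> simp <;> field_simp <;> ring

/-- For `v = (v₁,v₂)` with `v₁,v₂ > 0`, the subgroup `G(Ω₁, v|w|²)` of
the linear automorphism group of the quadrant (those `A` admitting `B ∈ ℂ*` with
`A·(v|w|²) = v|Bw|²`) consists exactly of the positive scalar matrices and the
anti-diagonal matrices with entries `η v₁/v₂`, `η v₂/v₁` (`η > 0`); in particular it
does not act transitively on `Ω₁`. -/
theorem subgroup_not_transitive (v₁ v₂ : ℝ) (hv₁ : 0 < v₁) (hv₂ : 0 < v₂)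
    (G : Set (Matrix (Fin 2) (Fin 2) ℝ))
    (hG : G = {A | IsUnit A ∧ (fun y => A.mulVec y) '' posQuadrant = posQuadrant ∧
        ∃ B : ℂ, B ≠ 0 ∧ ∀ w : ℂ,
          A.mulVec ![v₁ * ‖w‖ ^ 2, v₂ * ‖w‖ ^ 2]
            = ![v₁ * ‖B * w‖ ^ 2, v₂ * ‖B * w‖ ^ 2]}) :
    (G = {M | (∃ ρ : ℝ, 0 < ρ ∧ M = ρ • (1 : Matrix (Fin 2) (Fin 2) ℝ)) ∨
              (∃ η : ℝ, 0 < η ∧ M = !![0, η * v₁ / v₂; η * v₂ / v₁, 0])}) ∧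
    ¬ (∀ p ∈ posQuadrant, ∀ q ∈ posQuadrant, ∃ A ∈ G, A.mulVec p = q) := by
  have hone : (![v₁ * ‖(1:ℂ)‖ ^ 2, v₂ * ‖(1:ℂ)‖ ^ 2] : Fin 2 → ℝ) = ![v₁, v₂] := by
    funext i; fin_cases i <;> simp
  constructor
  · rw [hG]
    ext A
    constructor
    · rintro ⟨hu, him, B, hB, hBw⟩
      have h1 := hBw 1
      rw [hone, mul_one] at h1
      set r := ‖B‖ ^ 2 with hr
      have hrpos : 0 < r := by
        have : ‖B‖ ≠ 0 := by simpa using hB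
        positivity
      have hv : A.mulVec ![v₁, v₂] = ![r * v₁, r * v₂] := by
        rw [h1]; funext i; fin_cases i <;> simp <;> ring
      exact classify v₁ v₂ hv₁ hv₂ A hu him r hrpos hv
    · rintro (⟨ρ, hρ, rfl⟩ | ⟨η, hη, rfl⟩)
      · exact scalar_mem v₁ v₂ hv₁ hv₂ ρ hρ
      · exact anti_mem v₁ v₂ hv₁ hv₂ η hη
  · intro h
    obtain ⟨A, hA, hAp⟩ := h ![v₁, v₂] ⟨by simpa using hv₁, by simpa using hv₂⟩
      ![v₁, 2 * v₂] ⟨by simpa using hv₁, by simp; positivity⟩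
    rw [hG] at hA
    obtain ⟨-, -, B, hB, hBw⟩ := hA
    have h1 := hBw 1
    rw [hone, mul_one, hAp] at h1
    have c0 := congrFun h1 0
    have c1 := congrFun h1 1
    simp at c0 c1
    set r := ‖B‖ ^ 2 with hr
    have hr1 : r = 1 := by
      have : v₁ * r = v₁ * 1 := by rw [mul_one]; linarith [c0]
      exact mul_left_cancel₀ (ne_of_gt hv₁) this
    rw [hr1] at c1
    nlinarith
end

section
/- Let Ω₂ = {x ∈ ℝ³ : x₁>0, x₂>0, x₃>0} and let v ∈ ℝ³ be a nonzero vector with non-negative entries such that at least two entries of v are nonzero. Then the group of diagonal matrices diag(λ₁,λ₂,λ₃) with all λ_j > 0 having v as an eigenvector does not act transitively on Ω₂. -/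
/-- The open positive octant in `ℝ³`. -/
def posOctant : Set (Fin 3 → ℝ) := {x | 0 < x 0 ∧ 0 < x 1 ∧ 0 < x 2}

/-! A diagonal matrix having `v` as an eigenvector has equal entries on the support of `v`,
so it scales the coordinates `i`, `j` of two nonzero entries of `v` by the same factor and
cannot map `(1, 1, 1)` to a point whose `i`-th and `j`-th coordinates differ. -/

section DiagonalEigenvector

variable {ι R : Type*} [CommMonoidWithZero R] [IsCancelMulZero R] {d v : ι → R} {ρ : R} {i j : ι}

theorem diagonal_entry_eq_of_eigenvector (hρ : ∀ k, d k * v k = ρ * v k)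
    (hi : v i ≠ 0) (hj : v j ≠ 0) : d i = d j :=
  (mul_left_injective₀ hi (hρ i)).trans (mul_left_injective₀ hj (hρ j)).symm

theorem mul_eq_mul_of_diagonal_eigenvector {p q : ι → R} (hρ : ∀ k, d k * v k = ρ * v k)
    (hdp : ∀ k, d k * p k = q k) (hi : v i ≠ 0) (hj : v j ≠ 0) :
    q i * p j = q j * p i := by
  rw [← hdp i, ← hdp j, diagonal_entry_eq_of_eigenvector hρ hi hj]
  exact mul_right_comm _ _ _

end DiagonalEigenvector

theorem diag_eigvec_not_transitive_general (v : Fin 3 → ℝ)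
    (htwo : ∃ i j : Fin 3, i ≠ j ∧ v i ≠ 0 ∧ v j ≠ 0) :
    ¬ (∀ p ∈ posOctant, ∀ q ∈ posOctant, ∃ d : Fin 3 → ℝ,
        (∀ i, 0 < d i) ∧ (∃ ρ : ℝ, ∀ i, d i * v i = ρ * v i) ∧ (∀ i, d i * p i = q i)) := by
  intro h
  obtain ⟨i, j, hij, hvi, hvj⟩ := htwo
  obtain ⟨d, -, ⟨ρ, hρ⟩, hdq⟩ := h (fun _ => 1) (by norm_num [posOctant])
    (fun k => (k : ℕ) + 1) (by norm_num [posOctant])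
  have hq : ((i : ℕ) : ℝ) + 1 = (j : ℕ) + 1 := by
    simpa using mul_eq_mul_of_diagonal_eigenvector hρ hdq hvi hvj
  exact hij (Fin.ext (by exact_mod_cast add_right_cancel hq))

/-- If `v ∈ ℝ³` is nonzero with non-negative entries and at least two
nonzero entries, then the group of diagonal matrices with positive entries having `v`
as an eigenvector does not act transitively on the positive octant `Ω₂`. -/
theorem diag_eigvec_not_transitive (v : Fin 3 → ℝ) (hv : v ≠ 0) (hnn : ∀ i, 0 ≤ v i)
    (htwo : ∃ i j : Fin 3, i ≠ j ∧ v i ≠ 0 ∧ v j ≠ 0) :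
    ¬ (∀ p ∈ posOctant, ∀ q ∈ posOctant, ∃ d : Fin 3 → ℝ,
        (∀ i, 0 < d i) ∧ (∃ ρ : ℝ, ∀ i, d i * v i = ρ * v i) ∧ (∀ i, d i * p i = q i)) :=
  diag_eigvec_not_transitive_general v htwo
end

section
/- Let H(w,w') = (conj(w)·w', conj(w)·w', 0) be the Hermitian form on ℂ with values in ℂ³ and let Ω₃ = {x ∈ ℝ³ : x₁² - x₂² - x₃² > 0, x₁ > 0}, whose automorphism Lie algebra g(Ω₃) consists of matrices [[λ,p,q],[p,λ,r],[q,-r,λ]]. If Φ : ℂ³ → ℂ is ℂ-linear and for every w ∈ ℂ the real-linear map x ↦ Im H(w, Φ(x)), x ∈ ℝ³, lies in g(Ω₃), then Φ = 0. -/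
open Matrix

/-- The `ℂ³`-valued Hermitian form `H(w,w') = (conj(w)w', conj(w)w', 0)` on `ℂ`. -/
noncomputable def hermD6 (w w' : ℂ) : Fin 3 → ℂ :=
  ![(starRingEnd ℂ) w * w', (starRingEnd ℂ) w * w', 0]

/-- (`g_{1/2} = 0` for the Siegel domain `D₆`.) If `Φ : ℂ³ → ℂ` is
`ℂ`-linear and for every `w ∈ ℂ` the real-linear map `x ↦ Im H(w, Φ(x))` of `ℝ³` lies
in `g(Ω₃)` (the matrices `[[λ,p,q],[p,λ,r],[q,-r,λ]]`), then `Φ = 0`. -/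
theorem g_half_zero_D6 (Φ : (Fin 3 → ℂ) →ₗ[ℂ] ℂ)
    (hmem : ∀ w : ℂ, ∃ l p q r : ℝ,
      (Matrix.of fun i j : Fin 3 =>
          ((hermD6 w (Φ (fun l' => if l' = j then 1 else 0))) i).im)
        = !![l, p, q; p, l, r; q, -r, l]) :
    Φ = 0 := by
  -- first show Im(conj w * Φ e_j) = 0 for all w, j
  have him : ∀ (w : ℂ) (j : Fin 3),
      ((starRingEnd ℂ) w * Φ (fun l' => if l' = j then 1 else 0)).im = 0 := by
    intro w j
    obtain ⟨l, p, q, r, heq⟩ := hmem w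
    have E : ∀ i j' : Fin 3,
        ((hermD6 w (Φ (fun l' => if l' = j' then 1 else 0))) i).im
          = (!![l, p, q; p, l, r; q, -r, l]) i j' := by
      intro i j'
      exact congrFun (congrFun heq i) j'
    have hl : l = 0 := by
      have := E 2 2
      simp [hermD6] at this
      linarith
    have hr : r = 0 := by
      have := E 2 1
      simp [hermD6] at this
      linarith
    fin_cases j
    · have := E 0 0
      simp [hermD6] at this
      simpa [hl] using this
    · have := E 1 1
      simp [hermD6] at this
      simpa [hl] using this
    · have := E 1 2
      simp [hermD6] at this
      simpa [hr] using this
  have key : ∀ j : Fin 3, Φ (fun l' => if l' = j then 1 else 0) = 0 := by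
    intro j
    have h1 := him 1 j
    have hI := him Complex.I j
    set z := Φ (fun l' => if l' = j then 1 else 0) with hz
    simp [Complex.mul_im] at h1 hI
    exact Complex.ext (by simpa using hI) h1
  apply Module.Basis.ext (Pi.basisFun ℂ (Fin 3))
  intro j
  have : (Pi.basisFun ℂ (Fin 3)) j = (fun l' => if l' = j then (1:ℂ) else 0) := by
    funext l'
    simp [Pi.basisFun_apply, Pi.single_apply]
  rw [this, key j]
  simp
end

section
/- Let H(w,w') = (conj(w)w', conj(w)w', 0) be the ℂ³-valued Hermitian form on ℂ and g(Ω₃) the algebra of matrices [[λ,p,q],[p,λ,r],[q,-r,λ]]. If b : ℂ³ × ℂ → ℂ is a ℂ-bilinear map such that for every pair w, w' ∈ ℂ the real-linear map x ↦ Im H(w', b(x,w)), x ∈ ℝ³, lies in g(Ω₃), then b = 0. -/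
open Matrix

/-- If `b : ℂ³ × ℂ → ℂ` is `ℂ`-bilinear and for every `w, w' ∈ ℂ` the
real-linear map `x ↦ Im H(w', b(x,w))` of `ℝ³` lies in `g(Ω₃)` (the matrices
`[[λ,p,q],[p,λ,r],[q,-r,λ]]`), then `b = 0`. -/
theorem bilinear_b_zero_D6 (b : (Fin 3 → ℂ) →ₗ[ℂ] ℂ →ₗ[ℂ] ℂ)
    (hmem : ∀ w w' : ℂ, ∃ l p q r : ℝ,
      (Matrix.of fun i j : Fin 3 =>
          ((hermD6 w' (b (fun l' => if l' = j then 1 else 0) w)) i).im)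
        = !![l, p, q; p, l, r; q, -r, l]) :
    b = 0 := by
  have key : ∀ (w w' : ℂ) (j : Fin 3),
      ((starRingEnd ℂ) w' * b (fun l' => if l' = j then 1 else 0) w).im = 0 := by
    intro w w' j
    obtain ⟨l, p, q, r, hM⟩ := hmem w w'
    have e : ∀ i j : Fin 3, ((hermD6 w' (b (fun l' => if l' = j then 1 else 0) w)) i).im
        = (!![l, p, q; p, l, r; q, -r, l] : Matrix (Fin 3) (Fin 3) ℝ) i j := by
      intro i j; exact congrFun (congrFun hM i) j
    -- row 2 of hermD6 is 0
    have h20 := e 2 0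
    have h21 := e 2 1
    have h22 := e 2 2
    simp [hermD6] at h20 h21 h22
    -- h20 : 0 = q, h21 : 0 = -r, h22 : 0 = l
    have h10 := e 1 0
    have h00 := e 0 0
    simp [hermD6] at h10 h00
    -- h10 = p, h00 = l, but h10 and h00 are the same quantity
    have hp : p = 0 := by rw [h10] at h00; rw [h00, ← h22]
    have hj := e 0 j
    fin_cases j <;> simp_all [hermD6]
  have key2 : ∀ (j : Fin 3) (w : ℂ), b (fun l' => if l' = j then 1 else 0) w = 0 := by
    intro j w
    have h1 := key w 1 j
    have h2 := key w Complex.I j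
    simp [Complex.mul_im] at h1 h2
    apply Complex.ext <;> simp_all
  have key3 : ∀ j : Fin 3, b (Pi.single j 1) = 0 := by
    intro j
    apply LinearMap.ext; intro w
    have := key2 j w
    have hfun : (Pi.single j 1 : Fin 3 → ℂ) = fun l' => if l' = j then 1 else 0 := by
      funext l'; simp [Pi.single_apply]
    rw [hfun]
    simpa using this
  ext x
  simp [key3]
end
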